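/- As formal power series over ℚ, the series H(x) = 49x · (x^7;x^7)_∞^7 / (x;x)_∞^8 satisfies H(x) = 49x · exp(∑_{n≥1} e_n x^n), where for n = 7^m·n' with m ≥ 0 and 7 ∤ n', e_n = (σ(n)/n)·(1 + 42/(7^{m+1} − 1)). -/

import Mathlib

/-!
Write `θ = X d/dX`. Taking logarithmic derivatives of the partial products gives
`θ (x^r; x^r)_∞ = L_r · (x^r; x^r)_∞` with `L_r = -r ∑_{r ∣ n} σ(n/r) x^n`, and
`θ exp E = θE · exp E`. The relation `n e_n = 8 σ(n) - 49 σ(n/7)` (with `σ(n/7) = 0` for `7 ∤ n`),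
which is where the particular shape of `e_n` comes from, says `θE + 8 L_1 = 7 L_7`. Hence
`(x^7; x^7)_∞^7` and `exp E · (x; x)_∞^8` solve the same equation `θ F = 7 L_7 F` with constant
term `1`, and a solution of such an equation is determined by its constant term. The infinite
product and the exponential are reached through their partial products and partial sums, which
agree with them below any given degree.
-/

noncomputable section

/-- `sigma' n` is the sum of all positive divisors of `n` (including `1` and `n`). -/
def sigma' (n : ℕ) : ℕ := ∑ d ∈ n.divisors, d

/-- The q-Pochhammer symbol `(x^r; x^r)_∞ = ∏_{k≥1} (1 − x^{r·k})` as a formal power series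
over `ℚ`.  The factor for index `k` only affects coefficients of degree `≥ r·k`, so the `n`-th
coefficient of the infinite product equals that of the finite product over `k = 1, …, n+1`. -/
def pochhammerPS (r : ℕ) : PowerSeries ℚ :=
  PowerSeries.mk fun n =>
    PowerSeries.coeff (R := ℚ) n
      (∏ k ∈ Finset.range (n + 1), (1 - (PowerSeries.X : PowerSeries ℚ) ^ (r * (k + 1))))

/-- The formal logarithm of a power series with constant coefficient `1`:
`log f = −∑_{k≥1} (1 − f)^k / k`.  Since `1 − f` has zero constant term, `(1 − f)^k` does not
contribute to the `n`-th coefficient when `k > n` (and the `k = 0` term vanishes since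
division by zero is zero). -/
def logPS (f : PowerSeries ℚ) : PowerSeries ℚ :=
  PowerSeries.mk fun n =>
    - ∑ k ∈ Finset.range (n + 1), PowerSeries.coeff (R := ℚ) n ((1 - f) ^ k) / (k : ℚ)

/-- The formal exponential of a power series with constant coefficient `0`:
`exp f = ∑_{k≥0} f^k / k!`.  Since `f` has zero constant term, `f^k` does not contribute to
the `n`-th coefficient when `k > n`. -/
def expPS (f : PowerSeries ℚ) : PowerSeries ℚ :=
  PowerSeries.mk fun n =>
    ∑ k ∈ Finset.range (n + 1), PowerSeries.coeff (R := ℚ) n (f ^ k) / (Nat.factorial k : ℚ)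


open PowerSeries Finset

namespace Derivation

variable {R A : Type*} [CommRing R] [CommRing A] [Algebra R A] (D : Derivation R A A)

theorem map_mul_of_eq_mul {f g a b : A} (hf : D f = a * f) (hg : D g = b * g) :
    D (f * g) = (a + b) * (f * g) := by
  rw [leibniz, hf, hg, smul_eq_mul, smul_eq_mul]
  ring

theorem map_pow_of_eq_mul {f a : A} (hf : D f = a * f) (n : ℕ) :
    D (f ^ n) = (n • a) * f ^ n := by
  induction n with
  | zero => simp
  | succ n ih => rw [pow_succ, map_mul_of_eq_mul D ih hf, succ_nsmul]

theorem map_prod_of_eq_mul {ι : Type*} {s : Finset ι} {f a : ι → A}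
    (h : ∀ i ∈ s, D (f i) = a i * f i) : D (∏ i ∈ s, f i) = (∑ i ∈ s, a i) * ∏ i ∈ s, f i := by
  induction s using Finset.cons_induction with
  | empty => simp
  | cons j s _ ih =>
    rw [prod_cons, sum_cons, map_mul_of_eq_mul D (h j (mem_cons_self j s))
      (ih fun i hi => h i (mem_cons_of_mem hi))]

end Derivation

namespace PowerSeries

variable {R : Type*} [CommRing R]

variable (R) in
def eulerOp : Derivation R R⟦X⟧ R⟦X⟧ := (X : R⟦X⟧) • d⁄dX R

theorem coeff_eulerOp (f : R⟦X⟧) (n : ℕ) : coeff n (eulerOp R f) = n * coeff n f := by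
  cases n with
  | zero => simp [eulerOp]
  | succ n =>
    simp only [eulerOp, Derivation.smul_apply, smul_eq_mul, coeff_succ_X_mul, coeff_derivative]
    push_cast
    ring

theorem eulerOp_X_pow (m : ℕ) : eulerOp R (X ^ m) = (m : R⟦X⟧) * X ^ m := by
  ext n
  rw [coeff_eulerOp, ← map_natCast (C (R := R)), coeff_C_mul, coeff_X_pow]
  split_ifs with h <;> simp [h]

theorem eq_of_eulerOp_eq_mul [IsAddTorsionFree R] {L F G : R⟦X⟧} (hL : constantCoeff L = 0)
    (hF : eulerOp R F = L * F) (hG : eulerOp R G = L * G)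
    (h0 : constantCoeff F = constantCoeff G) : F = G := by
  rw [← sub_eq_zero]
  by_contra hH
  set H := F - G
  have hθ : eulerOp R H = L * H := by rw [map_sub, hF, hG, mul_sub]
  -- at the order `d` of `H` the coefficient of `θ H` is `d • coeff d H ≠ 0`, that of `L * H` is `0`
  set d := H.order.toNat
  have hd : d ≠ 0 := by
    intro hd
    refine coeff_order hH ?_
    rw [show H.order.toNat = 0 from hd, coeff_zero_eq_constantCoeff_apply, map_sub, h0,
      sub_self]
  have hLH : coeff d (L * H) = 0 := by
    apply coeff_of_lt_order
    calc (d : ℕ∞) < 1 + d := by norm_cast; omega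
      _ = 1 + H.order := by rw [coe_toNat_order hH]
      _ ≤ L.order + H.order := by gcongr; exact one_le_order_iff_constCoeff_eq_zero.2 hL
      _ ≤ (L * H).order := le_order_mul L H
  rw [← hθ, coeff_eulerOp, ← nsmul_eq_mul, nsmul_eq_zero_iff] at hLH
  exact hLH.elim (coeff_order hH) hd

theorem eulerOp_eq_mul_of_trunc {F L G : R⟦X⟧} {FN LN GN : ℕ → R⟦X⟧}
    (h : ∀ N, eulerOp R (FN N) = LN N * GN N) (hF : ∀ N, trunc N (FN N) = trunc N F)
    (hL : ∀ N, trunc N (LN N) = trunc N L) (hG : ∀ N, trunc N (GN N) = trunc N G) :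
    eulerOp R F = L * G := by
  ext n
  have hn := lt_add_one n
  rw [coeff_eulerOp, ← coeff_coe_trunc_of_lt hn, ← hF, coeff_coe_trunc_of_lt hn, ← coeff_eulerOp,
    h, coeff_mul_eq_coeff_trunc_mul_trunc _ _ hn, hL, hG,
    ← coeff_mul_eq_coeff_trunc_mul_trunc _ _ hn]

theorem trunc_mul_one_sub_X_pow (f : R⟦X⟧) {N m : ℕ} (h : N ≤ m) :
    trunc N (f * (1 - X ^ m)) = trunc N f := by
  rw [mul_sub, mul_one, trunc_sub, ← Nat.add_sub_cancel' h, pow_add, mul_comm, mul_assoc,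
    trunc_X_pow_self_mul, sub_zero]

def geomSeries (m : ℕ) : R⟦X⟧ := mk fun n => if m ∣ n then 1 else 0

theorem one_sub_X_pow_mul_geomSeries {m : ℕ} (hm : m ≠ 0) :
    (1 - X ^ m) * (geomSeries m : R⟦X⟧) = 1 := by
  have : (geomSeries m : R⟦X⟧) = expand m hm (mk 1) := by
    ext n
    simp [geomSeries, coeff_expand]
  rw [this, ← expand_X m hm, ← map_one (expand m hm), ← map_sub, ← map_mul, mul_comm,
    mk_one_mul_one_sub_eq_one, map_one]

theorem eulerOp_one_sub_X_pow {m : ℕ} (hm : m ≠ 0) :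
    eulerOp R (1 - X ^ m) = (-(m : R⟦X⟧) * (geomSeries m - 1)) * (1 - X ^ m) := by
  rw [map_sub, Derivation.map_one_eq_zero, eulerOp_X_pow]
  linear_combination (m : R⟦X⟧) * one_sub_X_pow_mul_geomSeries (R := R) hm

end PowerSeries

def pochhammerPartialProd (r N : ℕ) : ℚ⟦X⟧ := ∏ k ∈ range N, (1 - X ^ (r * (k + 1)))

/-- `-∑_n (∑_{d ∣ n, r ∣ d} d) X^n`, the multiples `d = r (k + 1)` of `r` being indexed by `k`. -/
def pochhammerLogDeriv (r : ℕ) : ℚ⟦X⟧ :=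
  mk fun n => -∑ k ∈ range n, if r * (k + 1) ∣ n then ((r * (k + 1) : ℕ) : ℚ) else 0

section Pochhammer

variable {r : ℕ}

theorem trunc_pochhammerPartialProd_of_le (hr : r ≠ 0) {N M : ℕ} (h : N ≤ M) :
    trunc N (pochhammerPartialProd r M) = trunc N (pochhammerPartialProd r N) := by
  induction M, h using Nat.le_induction with
  | base => rfl
  | succ M _ ih =>
    have : N ≤ r * (M + 1) := by nlinarith [Nat.one_le_iff_ne_zero.2 hr]
    rw [pochhammerPartialProd, prod_range_succ, ← pochhammerPartialProd,
      trunc_mul_one_sub_X_pow _ this, ih]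

theorem trunc_pochhammerPartialProd (hr : r ≠ 0) (N : ℕ) :
    trunc N (pochhammerPartialProd r N) = trunc N (pochhammerPS r) := by
  ext i
  rw [coeff_trunc, coeff_trunc]
  split_ifs with hi
  · have hP : coeff i (pochhammerPS r) = coeff i (pochhammerPartialProd r (i + 1)) := by
      rw [pochhammerPS, coeff_mk]; rfl
    rw [hP, ← coeff_coe_trunc_of_lt (lt_add_one i),
      trunc_pochhammerPartialProd_of_le hr (show i + 1 ≤ N from hi),
      coeff_coe_trunc_of_lt (lt_add_one i)]
  · rfl

theorem eulerOp_pochhammerPartialProd (hr : r ≠ 0) (N : ℕ) :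
    eulerOp ℚ (pochhammerPartialProd r N) =
      (∑ k ∈ range N, -((r * (k + 1) : ℕ) : ℚ⟦X⟧) * (geomSeries (r * (k + 1)) - 1)) *
        pochhammerPartialProd r N :=
  Derivation.map_prod_of_eq_mul _ fun k _ => eulerOp_one_sub_X_pow (by positivity)

theorem sum_range_ite_dvd_eq_sigma' {n N : ℕ} (hn : n ≠ 0) (h : n ≤ N) :
    ∑ k ∈ range N, (if k + 1 ∣ n then ((k + 1 : ℕ) : ℚ) else 0) = sigma' n := by
  have hdiv : n.divisors = ((range N).map (addRightEmbedding 1)).filter (· ∣ n) := by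
    ext d
    simp only [Nat.mem_divisors, mem_filter, mem_map, mem_range, addRightEmbedding_apply]
    constructor
    · rintro ⟨hd, -⟩
      have := Nat.le_of_dvd (Nat.pos_of_ne_zero hn) hd
      have := Nat.pos_of_dvd_of_pos hd (Nat.pos_of_ne_zero hn)
      exact ⟨⟨d - 1, by omega, by omega⟩, hd⟩
    · rintro ⟨-, hd⟩
      exact ⟨hd, hn⟩
  rw [sigma', hdiv, Nat.cast_sum, sum_filter, sum_map]
  rfl

theorem trunc_sum_logDeriv_one_sub_X_pow (hr : r ≠ 0) (N : ℕ) :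
    trunc N (∑ k ∈ range N, -((r * (k + 1) : ℕ) : ℚ⟦X⟧) * (geomSeries (r * (k + 1)) - 1)) =
      trunc N (pochhammerLogDeriv r) := by
  ext i
  rw [coeff_trunc, coeff_trunc]
  split_ifs with hi
  · rw [map_sum, pochhammerLogDeriv, coeff_mk, ← sum_neg_distrib]
    simp only [← map_natCast (C (R := ℚ)), ← map_neg, coeff_C_mul, map_sub, geomSeries, coeff_mk,
      coeff_one]
    rcases eq_or_ne i 0 with rfl | hi0
    · simp
    refine (sum_subset (range_subset_range.2 hi.le) fun k _ hk => ?_).symm.trans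
      (sum_congr rfl fun k _ => by split_ifs <;> simp)
    have : i < r * (k + 1) := by
      have := Nat.one_le_iff_ne_zero.2 hr
      simp only [mem_range, not_lt] at hk; nlinarith
    rw [if_neg fun hd => absurd (Nat.le_of_dvd (Nat.pos_of_ne_zero hi0) hd) (by omega),
      if_neg hi0]
    simp
  · rfl

theorem eulerOp_pochhammerPS (hr : r ≠ 0) :
    eulerOp ℚ (pochhammerPS r) = pochhammerLogDeriv r * pochhammerPS r :=
  eulerOp_eq_mul_of_trunc (eulerOp_pochhammerPartialProd hr) (trunc_pochhammerPartialProd hr)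
    (trunc_sum_logDeriv_one_sub_X_pow hr) (trunc_pochhammerPartialProd hr)

theorem coeff_pochhammerLogDeriv (hr : r ≠ 0) (n : ℕ) :
    coeff n (pochhammerLogDeriv r) = if r ∣ n then -(r * sigma' (n / r) : ℚ) else 0 := by
  rw [pochhammerLogDeriv, coeff_mk]
  split_ifs with h
  · obtain ⟨u, rfl⟩ := h
    rcases eq_or_ne u 0 with rfl | hu
    · simp [sigma']
    rw [Nat.mul_div_cancel_left _ (Nat.pos_of_ne_zero hr),
      ← sum_range_ite_dvd_eq_sigma' hu (Nat.le_mul_of_pos_left u (Nat.pos_of_ne_zero hr)),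
      mul_sum]
    simp_rw [Nat.mul_dvd_mul_iff_left (Nat.pos_of_ne_zero hr)]
    congr 1
    refine sum_congr rfl fun k _ => ?_
    split_ifs <;> push_cast <;> ring
  · refine neg_eq_zero.2 (sum_eq_zero fun k _ => if_neg fun hd => h ?_)
    exact (dvd_mul_right r (k + 1)).trans hd

theorem constantCoeff_pochhammerPS (hr : r ≠ 0) : constantCoeff (pochhammerPS r) = 1 := by
  rw [← coeff_zero_eq_constantCoeff_apply, pochhammerPS, coeff_mk]
  simp [hr]

end Pochhammer

def expPartialSum (E : ℚ⟦X⟧) (N : ℕ) : ℚ⟦X⟧ := ∑ k ∈ range N, (k.factorial : ℚ)⁻¹ • E ^ k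

section Exp

variable {E : ℚ⟦X⟧}

theorem trunc_expPartialSum (hE : constantCoeff E = 0) {N M : ℕ} (h : N ≤ M) :
    trunc N (expPartialSum E M) = trunc N (expPS E) := by
  ext i
  rw [coeff_trunc, coeff_trunc]
  split_ifs with hi
  · rw [expPartialSum, map_sum, expPS, coeff_mk]
    refine (sum_subset (range_subset_range.2 (by omega)) fun k _ hk => ?_).symm.trans
      (sum_congr rfl fun k _ => by rw [coeff_smul, smul_eq_mul, div_eq_inv_mul])
    have hik : i < k := by simpa using hk
    rw [coeff_smul, X_pow_dvd_iff.1 (pow_dvd_pow_of_dvd (X_dvd_iff.2 hE) k) i hik, smul_zero]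
  · rfl

theorem eulerOp_expPartialSum_succ (N : ℕ) :
    eulerOp ℚ (expPartialSum E (N + 1)) = eulerOp ℚ E * expPartialSum E N := by
  rw [expPartialSum, sum_range_succ', expPartialSum, mul_sum, map_add, map_sum, pow_zero,
    Derivation.map_smul, Derivation.map_one_eq_zero, smul_zero, add_zero]
  refine sum_congr rfl fun k _ => ?_
  rw [Derivation.map_smul, Derivation.leibniz_pow, Nat.add_sub_cancel, smul_eq_mul (E ^ k),
    mul_comm (E ^ k), ← Nat.cast_smul_eq_nsmul ℚ, smul_smul, mul_smul_comm]
  congr 1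
  rw [Nat.factorial_succ]
  push_cast
  field_simp

theorem eulerOp_expPS (hE : constantCoeff E = 0) :
    eulerOp ℚ (expPS E) = eulerOp ℚ E * expPS E :=
  eulerOp_eq_mul_of_trunc (FN := fun N => expPartialSum E (N + 1)) (LN := fun _ => eulerOp ℚ E)
    eulerOp_expPartialSum_succ (fun N => trunc_expPartialSum hE (Nat.le_succ N)) (fun _ => rfl)
    (fun _ => trunc_expPartialSum hE le_rfl)

theorem constantCoeff_expPS : constantCoeff (expPS E) = 1 := by
  rw [← coeff_zero_eq_constantCoeff_apply, expPS, coeff_mk]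
  simp

end Exp

theorem sigma'_seven_pow_mul {n' : ℕ} (h : ¬ 7 ∣ n') (m : ℕ) :
    (sigma' (7 ^ m * n') : ℚ) = (7 ^ (m + 1) - 1) / 6 * sigma' n' := by
  have hcop : Nat.Coprime (7 ^ m) n' :=
    Nat.Coprime.pow_left m ((Nat.Prime.coprime_iff_not_dvd (by norm_num)).2 h)
  rw [sigma', sigma', Nat.Coprime.sum_divisors_mul hcop, Nat.sum_divisors_prime_pow (by norm_num)]
  push_cast
  rw [geom_sum_eq (by norm_num)]
  ring

theorem natCast_mul_eq_eight_mul_sigma'_sub {e : ℕ → ℚ}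
    (he : ∀ m n' : ℕ, ¬ 7 ∣ n' →
      e (7 ^ m * n') = ((sigma' (7 ^ m * n') : ℚ) / ((7 ^ m * n' : ℕ) : ℚ)) *
        (1 + 42 / (7 ^ (m + 1) - 1)))
    {n : ℕ} (hn : n ≠ 0) :
    n * e n = 8 * sigma' n - if 7 ∣ n then 49 * (sigma' (n / 7) : ℚ) else 0 := by
  obtain ⟨m, n', h7, rfl⟩ := Nat.exists_eq_pow_mul_and_not_dvd hn 7 (by norm_num)
  have hn' : (n' : ℚ) ≠ 0 := Nat.cast_ne_zero.2 (right_ne_zero_of_mul hn)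
  have hpow (j : ℕ) : (7 : ℚ) ^ (j + 1) - 1 ≠ 0 := by
    have : (1 : ℚ) < 7 ^ (j + 1) := one_lt_pow₀ (by norm_num) (by omega)
    linarith
  rw [he m n' h7, sigma'_seven_pow_mul h7]
  cases m with
  | zero =>
    rw [if_neg (by simpa using h7)]
    field_simp
    ring
  | succ k =>
    rw [if_pos (dvd_mul_of_dvd_left (dvd_pow_self 7 k.succ_ne_zero) _),
      pow_succ', mul_assoc, Nat.mul_div_cancel_left _ (by norm_num), sigma'_seven_pow_mul h7]
    have := hpow (k + 1)
    have := hpow k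
    push_cast
    field_simp
    ring

theorem eulerOp_mk_add_eight_smul_pochhammerLogDeriv {e : ℕ → ℚ}
    (he : ∀ m n' : ℕ, ¬ 7 ∣ n' →
      e (7 ^ m * n') = ((sigma' (7 ^ m * n') : ℚ) / ((7 ^ m * n' : ℕ) : ℚ)) *
        (1 + 42 / (7 ^ (m + 1) - 1))) :
    eulerOp ℚ (mk fun n => if n = 0 then 0 else e n) + 8 • pochhammerLogDeriv 1 =
      7 • pochhammerLogDeriv 7 := by
  ext n
  rw [map_add, map_nsmul, map_nsmul, coeff_eulerOp, coeff_mk,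
    coeff_pochhammerLogDeriv one_ne_zero, coeff_pochhammerLogDeriv (by norm_num)]
  rcases eq_or_ne n 0 with rfl | hn
  · simp [sigma']
  rw [if_neg hn, natCast_mul_eq_eight_mul_sigma'_sub he hn, if_pos (one_dvd n), Nat.div_one]
  split_ifs <;> simp only [nsmul_eq_mul, Nat.cast_ofNat, Nat.cast_one] <;> ring

/-- As formal power series over `ℚ`, the series
`H(x) = 49x·(x^7;x^7)_∞^7 / (x;x)_∞^8` satisfies `H(x) = 49x·exp(∑_{n≥1} e_n x^n)`, where for
`n = 7^m·n'` with `m ≥ 0` and `7 ∤ n'`, `e_n = (σ(n)/n)·(1 + 42/(7^(m+1) − 1))`. -/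
theorem stmt7 (e : ℕ → ℚ)
    (he : ∀ m n' : ℕ, ¬ 7 ∣ n' →
      e (7 ^ m * n') = ((sigma' (7 ^ m * n') : ℚ) / ((7 ^ m * n' : ℕ) : ℚ)) *
        (1 + 42 / (7 ^ (m + 1) - 1))) :
    49 * PowerSeries.X * pochhammerPS 7 ^ 7 * (pochhammerPS 1 ^ 8)⁻¹ =
      49 * PowerSeries.X * expPS (PowerSeries.mk fun n => if n = 0 then 0 else e n) := by
  set E : ℚ⟦X⟧ := mk fun n => if n = 0 then 0 else e n
  have hE : constantCoeff E = 0 := by simp [E]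
  have hP₁ := constantCoeff_pochhammerPS one_ne_zero
  have hP₇ := constantCoeff_pochhammerPS (r := 7) (by norm_num)
  have key : pochhammerPS 7 ^ 7 = expPS E * pochhammerPS 1 ^ 8 := by
    refine eq_of_eulerOp_eq_mul ?_
      ((eulerOp ℚ).map_pow_of_eq_mul (eulerOp_pochhammerPS (by norm_num)) 7) ?_ ?_
    · rw [map_nsmul, ← coeff_zero_eq_constantCoeff_apply, coeff_pochhammerLogDeriv (by norm_num)]
      simp [sigma']
    · rw [← eulerOp_mk_add_eight_smul_pochhammerLogDeriv he]
      exact (eulerOp ℚ).map_mul_of_eq_mul (eulerOp_expPS hE)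
        ((eulerOp ℚ).map_pow_of_eq_mul (eulerOp_pochhammerPS one_ne_zero) 8)
    · simp [hP₁, hP₇, constantCoeff_expPS]
  calc 49 * X * pochhammerPS 7 ^ 7 * (pochhammerPS 1 ^ 8)⁻¹
      = 49 * X * expPS E * (pochhammerPS 1 ^ 8 * (pochhammerPS 1 ^ 8)⁻¹) := by rw [key]; ring
    _ = 49 * X * expPS E := by rw [PowerSeries.mul_inv_cancel _ (by simp [hP₁]), mul_one]
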